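/- For every integer k ≥ 1, every X ∈ ℕ, and every real ξ, the oscillatory integral v(ξ) = ∫_0^X e^{2πi ξ z^k} dz satisfies |v(ξ)| ≤ C_k · X · (1 + X^k |ξ|)^{-1/k} for a constant C_k depending only on k. -/

import Mathlib

/-!
Trivially `‖v(ξ)‖ ≤ X`. For `ξ ≠ 0` put `s = |ξ|^{1/k}` and split `[0, X]` at `1/s`. The first
piece is at most `1/s`. On `[1/s, X]` write `e(ξ z^k)` as `g · (c e(ξ z^k))'` with `‖c‖ = 1/(2π)`
and `g z = 1/(|ξ| k z^{k-1})`, the reciprocal of the phase derivative up to a constant; `g` is positive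
and decreasing, so integrating by parts bounds that piece by `2 ‖c‖ g(1/s) = 1/(π k s)`. Hence
`‖v(ξ)‖ s ≤ 2`, and `(1 + X^k |ξ|)^{1/k} ≤ 1 + X s` gives the theorem with `C_k = 3`.
-/

noncomputable def e (x : ℝ) : ℂ := Complex.exp (2 * Real.pi * Complex.I * x)

noncomputable def oscInt (k : ℕ) (X : ℝ) (ξ : ℝ) : ℂ := ∫ z in (0:ℝ)..X, e (ξ * z ^ k)

open Set intervalIntegral MeasureTheory

theorem norm_integral_smul_deriv_le_of_antitone {E : Type*} [NormedAddCommGroup E]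
    [NormedSpace ℝ E] [CompleteSpace E] {a b M : ℝ} {g g' : ℝ → ℝ} {f f' : ℝ → E}
    (hab : a ≤ b) (hgg' : ∀ x ∈ Icc a b, HasDerivAt g (g' x) x)
    (hff' : ∀ x ∈ Icc a b, HasDerivAt f (f' x) x)
    (hg' : IntervalIntegrable g' volume a b) (hf' : IntervalIntegrable f' volume a b)
    (hg'_nonpos : ∀ x ∈ Icc a b, g' x ≤ 0) (hgb : 0 ≤ g b) (hf : ∀ x ∈ Icc a b, ‖f x‖ ≤ M) :
    ‖∫ x in a..b, g x • f' x‖ ≤ 2 * M * g a := by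
  rw [← uIcc_of_le hab] at hgg' hff'
  have hM : 0 ≤ M := (norm_nonneg _).trans (hf a (left_mem_Icc.mpr hab))
  have hdrop : ∫ x in a..b, -g' x = g a - g b := by
    rw [intervalIntegral.integral_neg, integral_eq_sub_of_hasDerivAt hgg' hg', neg_sub]
  have hga : g b ≤ g a := by
    have : 0 ≤ ∫ x in a..b, -g' x :=
      integral_nonneg hab fun x hx => neg_nonneg.mpr (hg'_nonpos x hx)
    linarith
  have hrem : ‖∫ x in a..b, g' x • f x‖ ≤ M * (g a - g b) := by
    calc ‖∫ x in a..b, g' x • f x‖ ≤ ∫ x in a..b, M * -g' x := by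
          refine norm_integral_le_of_norm_le hab (ae_of_all _ fun x hx => ?_) (hg'.neg.const_mul M)
          rw [norm_smul, Real.norm_eq_abs, abs_of_nonpos (hg'_nonpos x (Ioc_subset_Icc_self hx)),
            mul_comm]
          exact mul_le_mul_of_nonneg_right (hf x (Ioc_subset_Icc_self hx))
            (neg_nonneg.mpr (hg'_nonpos x (Ioc_subset_Icc_self hx)))
      _ = M * (g a - g b) := by rw [intervalIntegral.integral_const_mul, hdrop]
  have hend : ∀ x ∈ Icc a b, 0 ≤ g x → ‖g x • f x‖ ≤ M * g x := fun x hx hgx => by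
    rw [norm_smul, Real.norm_eq_abs, abs_of_nonneg hgx, mul_comm]
    exact mul_le_mul_of_nonneg_right (hf x hx) hgx
  rw [integral_smul_deriv_eq_deriv_smul hgg' hff' hg' hf']
  calc ‖g b • f b - g a • f a - ∫ x in a..b, g' x • f x‖
      ≤ ‖g b • f b‖ + ‖g a • f a‖ + ‖∫ x in a..b, g' x • f x‖ :=
        norm_sub_le_of_le (norm_sub_le _ _) le_rfl
    _ ≤ M * g b + M * g a + M * (g a - g b) := by
      gcongr
      · exact hend b (right_mem_Icc.mpr hab) hgb
      · exact hend a (left_mem_Icc.mpr hab) (hgb.trans hga)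
    _ = 2 * M * g a := by ring

theorem norm_e (x : ℝ) : ‖e x‖ = 1 := by
  rw [e, Complex.norm_exp]
  simp

@[fun_prop]
theorem continuous_e : Continuous e := by
  unfold e; fun_prop

theorem hasDerivAt_e (x : ℝ) : HasDerivAt e (2 * Real.pi * Complex.I * e x) x := by
  have := ((hasDerivAt_id (x : ℂ)).const_mul (2 * Real.pi * Complex.I)).cexp.comp_ofReal
  exact this.congr_deriv (by simp [e]; ring)

theorem hasDerivAt_e_mul_pow (ξ : ℝ) (k : ℕ) (z : ℝ) :
    HasDerivAt (fun z => e (ξ * z ^ k))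
      ((ξ * (k * z ^ (k - 1))) • (2 * Real.pi * Complex.I * e (ξ * z ^ k))) z :=
  (hasDerivAt_e _).scomp z ((hasDerivAt_pow k z).const_mul ξ)

theorem norm_integral_e_mul_pow_le {k : ℕ} (hk : 1 ≤ k) {ξ a b : ℝ} (hξ : ξ ≠ 0) (ha : 0 < a)
    (hab : a ≤ b) : ‖∫ z in a..b, e (ξ * z ^ k)‖ ≤ (Real.pi * |ξ| * k * a ^ (k - 1))⁻¹ := by
  set c : ℂ := |ξ| / (2 * Real.pi * Complex.I * ξ)
  set g : ℝ → ℝ := fun z => (|ξ| * k * z ^ (k - 1))⁻¹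
  set g' : ℝ → ℝ := fun z =>
    -(|ξ| * k * ((k - 1 : ℕ) * z ^ (k - 1 - 1))) / (|ξ| * k * z ^ (k - 1)) ^ 2
  set f' : ℝ → ℂ := fun z =>
    c * ((ξ * (k * z ^ (k - 1))) • (2 * Real.pi * Complex.I * e (ξ * z ^ k)))
  have hpos : ∀ z ∈ Icc a b, 0 < |ξ| * k * z ^ (k - 1) := fun z hz => by
    have : 0 < z := ha.trans_le hz.1
    have : (0 : ℝ) < k := by exact_mod_cast hk
    positivity
  have hgg' : ∀ z ∈ Icc a b, HasDerivAt g (g' z) z := fun z hz =>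
    ((hasDerivAt_pow (k - 1) z).const_mul (|ξ| * k)).inv (hpos z hz).ne'
  have hg' : ContinuousOn g' (Icc a b) :=
    ContinuousOn.div (by fun_prop) (by fun_prop) fun z hz => (pow_pos (hpos z hz) 2).ne'
  have hg'_nonpos : ∀ z ∈ Icc a b, g' z ≤ 0 := fun z hz => by
    have : 0 < z := ha.trans_le hz.1
    simp only [g', neg_div, neg_nonpos]
    positivity
  have hf' : Continuous f' := by fun_prop
  have hnorm_c : ‖c‖ = (2 * Real.pi)⁻¹ := by
    have : |ξ| ≠ 0 := abs_ne_zero.mpr hξ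
    simp [c, Complex.norm_real, abs_of_pos Real.pi_pos]
    field_simp
  have hgf' : EqOn (fun z => g z • f' z) (fun z => e (ξ * z ^ k)) (uIcc a b) := fun z hz => by
    rw [uIcc_of_le hab] at hz
    have hgz : ((|ξ| * k * z ^ (k - 1) : ℝ) : ℂ) ≠ 0 := Complex.ofReal_ne_zero.mpr (hpos z hz).ne'
    have hξ' : (ξ : ℂ) ≠ 0 := Complex.ofReal_ne_zero.mpr hξ
    simp only [g, f', c, Complex.real_smul]
    push_cast at hgz ⊢
    field_simp
    exact mul_div_cancel_left₀ _ hgz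
  have key := norm_integral_smul_deriv_le_of_antitone hab hgg'
    (fun z _ => (hasDerivAt_e_mul_pow ξ k z).const_mul c)
    (hg'.intervalIntegrable_of_Icc hab) (hf'.intervalIntegrable a b)
    hg'_nonpos (inv_nonneg.mpr (hpos b (right_mem_Icc.mpr hab)).le)
    (M := (2 * Real.pi)⁻¹) (fun z _ => by rw [norm_mul, norm_e, hnorm_c, mul_one])
  rw [← integral_congr hgf']
  refine key.trans_eq ?_
  simp only [g]
  field_simp

theorem norm_oscInt_le (k : ℕ) {X : ℝ} (hX : 0 ≤ X) (ξ : ℝ) : ‖oscInt k X ξ‖ ≤ X := by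
  simpa [oscInt, abs_of_nonneg hX] using
    norm_integral_le_of_norm_le_const (a := 0) (b := X) fun z _ => (norm_e (ξ * z ^ k)).le

theorem norm_oscInt_mul_rpow_le {k : ℕ} (hk : 1 ≤ k) {X : ℝ} (hX : 0 ≤ X) (ξ : ℝ) :
    ‖oscInt k X ξ‖ * |ξ| ^ (k⁻¹ : ℝ) ≤ 2 := by
  have hk0 : k ≠ 0 := by omega
  rcases eq_or_ne ξ 0 with rfl | hξ
  · simp [Real.zero_rpow (inv_ne_zero (Nat.cast_ne_zero.mpr hk0))]
  set s := |ξ| ^ (k⁻¹ : ℝ)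
  have hs : 0 < s := Real.rpow_pos_of_pos (abs_pos.mpr hξ) _
  have hsk : s ^ k = |ξ| := Real.rpow_inv_natCast_pow (abs_nonneg ξ) hk0
  suffices ‖oscInt k X ξ‖ ≤ 2 * s⁻¹ by
    calc ‖oscInt k X ξ‖ * s ≤ 2 * s⁻¹ * s := by gcongr
      _ = 2 := by field_simp
  rcases le_or_gt X s⁻¹ with hXs | hsX
  · linarith [norm_oscInt_le k hX ξ, inv_pos.mpr hs]
  have htail : ‖∫ z in s⁻¹..X, e (ξ * z ^ k)‖ ≤ s⁻¹ := by
    have hscale : |ξ| * (s⁻¹) ^ (k - 1) = s := by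
      rw [← hsk, ← pow_sub_mul_pow s hk, pow_one, inv_pow]
      field_simp
    calc ‖∫ z in s⁻¹..X, e (ξ * z ^ k)‖ ≤ (Real.pi * |ξ| * k * s⁻¹ ^ (k - 1))⁻¹ :=
          norm_integral_e_mul_pow_le hk hξ (inv_pos.mpr hs) hsX.le
      _ = (Real.pi * k * s)⁻¹ := by congr 1; linear_combination Real.pi * k * hscale
      _ ≤ s⁻¹ := by
          have : (1 : ℝ) ≤ k := by exact_mod_cast hk
          have hπk : 1 ≤ Real.pi * k := by nlinarith [Real.pi_gt_three]
          gcongr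
          exact le_mul_of_one_le_left hs.le hπk
  have hsplit : oscInt k X ξ = oscInt k s⁻¹ ξ + ∫ z in s⁻¹..X, e (ξ * z ^ k) := by
    have hcont : Continuous fun z => e (ξ * z ^ k) := by fun_prop
    exact (integral_add_adjacent_intervals (hcont.intervalIntegrable _ _)
      (hcont.intervalIntegrable _ _)).symm
  calc ‖oscInt k X ξ‖ ≤ s⁻¹ + s⁻¹ :=
        hsplit ▸ norm_add_le_of_le (norm_oscInt_le k (inv_pos.mpr hs).le ξ) htail
    _ = 2 * s⁻¹ := by ring

theorem osc_integral_decay (k : ℕ) (hk : 1 ≤ k) :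
    ∃ C : ℝ, 0 < C ∧ ∀ (X : ℕ) (ξ : ℝ),
      ‖oscInt k X ξ‖ ≤ C * X * (1 + (X : ℝ) ^ k * |ξ|) ^ (-(1 / (k : ℝ))) := by
  refine ⟨3, by norm_num, fun X ξ => ?_⟩
  have hX : (0 : ℝ) ≤ X := X.cast_nonneg
  have hk' : (k⁻¹ : ℝ) ≤ 1 := inv_le_one_of_one_le₀ (by exact_mod_cast hk)
  have hsub : (1 + (X : ℝ) ^ k * |ξ|) ^ (k⁻¹ : ℝ) ≤ 1 + X * |ξ| ^ (k⁻¹ : ℝ) := by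
    refine (Real.rpow_add_le_add_rpow zero_le_one (by positivity) (by positivity) hk').trans_eq ?_
    rw [Real.one_rpow, Real.mul_rpow (by positivity) (abs_nonneg ξ),
      Real.pow_rpow_inv_natCast hX (by omega)]
  rw [one_div, Real.rpow_neg (by positivity), ← div_eq_mul_inv,
    le_div_iff₀ (Real.rpow_pos_of_pos (by positivity) _)]
  calc ‖oscInt k X ξ‖ * (1 + (X : ℝ) ^ k * |ξ|) ^ (k⁻¹ : ℝ)
      ≤ ‖oscInt k X ξ‖ + X * (‖oscInt k X ξ‖ * |ξ| ^ (k⁻¹ : ℝ)) := by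
        nlinarith [norm_nonneg (oscInt k X ξ)]
    _ ≤ X + X * 2 := by
        gcongr
        exacts [norm_oscInt_le k hX ξ, norm_oscInt_mul_rpow_le hk hX ξ]
    _ = 3 * X := by ring
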